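/- Let ξ be the Lie algebra endomorphism of the free Lie algebra L_2 on generators x, y determined by ξ(x) = ax + cy and ξ(y) = bx + dy with ad − bc ≠ 0 (so that ξ is an automorphism). Then ξ maps every symmetric element of L_2 to a symmetric element if and only if a = d and b = c; in that case the determinant condition reads a² − b² ≠ 0 and the inverse automorphism is given by ξ⁻¹(x) = (a² − b²)⁻¹(ax − by), ξ⁻¹(y) = (a² − b²)⁻¹(−bx + ay). -/

import Mathlib

noncomputable section

open LieAlgebra LieModule

variable (K : Type*) [Field K] [CharZero K] (n c : ℕ)

/-- The free Lie algebra `L_n` of rank `n` over `K`. -/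
abbrev L := FreeLieAlgebra K (Fin n)

/-- The generators `x_1, …, x_n` of `L_n`. -/
def X (i : Fin n) : L K n := FreeLieAlgebra.of K i

/-- The automorphic action of a permutation `π ∈ S_n` on `L_n`, permuting the generators. -/
def permMap (π : Equiv.Perm (Fin n)) : L K n →ₗ⁅K⁆ L K n :=
  FreeLieAlgebra.lift K (fun i => FreeLieAlgebra.of K (π i))

/-- An element of `L_2` is symmetric if it is fixed by the automorphism exchanging the two
generators `x` and `y`. -/
def LIsSymm (p : L K 2) : Prop := permMap K 2 (Equiv.swap 0 1) p = p

/-- The linear endomorphism `ξ` of `L_2` with `ξ(x) = ax + cy` and `ξ(y) = bx + dy`. -/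
def xiMap (a b c d : K) : L K 2 →ₗ⁅K⁆ L K 2 :=
  FreeLieAlgebra.lift K ![a • X K 2 0 + c • X K 2 1, b • X K 2 0 + d • X K 2 1]

/-! A symmetric element `p` satisfies `φ p = ψ p` for any two evaluations `φ, ψ` of `L_2` that
differ by exchanging the images of `x` and `y`; we evaluate at `x ↦ e, y ↦ f` and `x ↦ f, y ↦ e`
in `gl₂`. Applied to `x + y`, whose image is `(a + b) x + (c + d) y`, this gives `a + b = c + d`.
Since `ξ [x, y] = (ad − bc) [x, y]`, the symmetric element `[x, [x, y]] + [y, [y, x]]` is sent to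
`(ad − bc) [(a − b) x + (c − d) y, [x, y]]`, which forces `a − b = d − c`. Conversely, for `a = d`
and `b = c` the map `ξ` commutes with the exchange. Composition of the maps `ξ` corresponds to
the product of their coefficient matrices, so the inverse comes from the adjugate matrix. -/

section

variable {F : Type*} [Field F]

section Lift

variable {A : Type*} [LieRing A] [LieAlgebra F A]

theorem lift_comp_permMap {n : ℕ} (π : Equiv.Perm (Fin n)) (f : Fin n → A) :
    (FreeLieAlgebra.lift F f).comp (permMap F n π) = FreeLieAlgebra.lift F (f ∘ π) :=
  FreeLieAlgebra.hom_ext fun i => by simp [permMap, FreeLieAlgebra.lift_of_apply]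

theorem LIsSymm.lift_swap_apply {p : L F 2} (hp : LIsSymm F p) (f : Fin 2 → A) :
    FreeLieAlgebra.lift F (f ∘ Equiv.swap 0 1) p = FreeLieAlgebra.lift F f p := by
  rw [← lift_comp_permMap, LieHom.comp_apply, hp]

theorem L.hom_ext_two {f g : L F 2 →ₗ⁅F⁆ A} (h₀ : f (X F 2 0) = g (X F 2 0))
    (h₁ : f (X F 2 1) = g (X F 2 1)) : f = g :=
  FreeLieAlgebra.hom_ext (Fin.forall_fin_two.2 ⟨h₀, h₁⟩)

end Lift

theorem permMap_X {n : ℕ} (π : Equiv.Perm (Fin n)) (i : Fin n) :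
    permMap F n π (X F n i) = X F n (π i) :=
  FreeLieAlgebra.lift_of_apply _ _

theorem lIsSymm_X_add_X : LIsSymm F (X F 2 0 + X F 2 1) := by
  simp [LIsSymm, permMap_X, add_comm]

theorem lIsSymm_lie_lie_add_lie_lie :
    LIsSymm F (⁅X F 2 0, ⁅X F 2 0, X F 2 1⁆⁆ + ⁅X F 2 1, ⁅X F 2 1, X F 2 0⁆⁆) := by
  simp [LIsSymm, permMap_X, add_comm]

theorem LIsSymm.of_smul {c : F} {p : L F 2} (hc : c ≠ 0) (hp : LIsSymm F (c • p)) :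
    LIsSymm F p :=
  smul_right_injective _ hc (by simpa [LIsSymm] using hp)

theorem xiMap_X_zero (a b c d : F) : xiMap F a b c d (X F 2 0) = a • X F 2 0 + c • X F 2 1 :=
  FreeLieAlgebra.lift_of_apply _ _

theorem xiMap_X_one (a b c d : F) : xiMap F a b c d (X F 2 1) = b • X F 2 0 + d • X F 2 1 :=
  FreeLieAlgebra.lift_of_apply _ _

theorem xiMap_lie_X_zero_X_one (a b c d : F) :
    xiMap F a b c d ⁅X F 2 0, X F 2 1⁆ = (a * d - b * c) • ⁅X F 2 0, X F 2 1⁆ := by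
  rw [LieHom.map_lie, xiMap_X_zero, xiMap_X_one]
  simp only [add_lie, lie_add, smul_lie, lie_smul, lie_self, ← lie_skew (X F 2 1) (X F 2 0)]
  module

theorem xiMap_lie_lie_add_lie_lie (a b c d : F) :
    xiMap F a b c d (⁅X F 2 0, ⁅X F 2 0, X F 2 1⁆⁆ + ⁅X F 2 1, ⁅X F 2 1, X F 2 0⁆⁆) =
      (a * d - b * c) • ⁅(a - b) • X F 2 0 + (c - d) • X F 2 1, ⁅X F 2 0, X F 2 1⁆⁆ := by
  rw [← lie_skew (X F 2 1) (X F 2 0), map_add, LieHom.map_lie _ (X F 2 0),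
    LieHom.map_lie _ (X F 2 1), map_neg, xiMap_lie_X_zero_X_one, xiMap_X_zero, xiMap_X_one]
  simp only [lie_neg, lie_smul, add_lie, smul_lie]
  module

theorem permMap_swap_comp_xiMap (a b : F) :
    (permMap F 2 (Equiv.swap 0 1)).comp (xiMap F a b b a) =
      (xiMap F a b b a).comp (permMap F 2 (Equiv.swap 0 1)) := by
  apply L.hom_ext_two <;> simp [xiMap_X_zero, xiMap_X_one, permMap_X, add_comm]

theorem LIsSymm.xiMap {p : L F 2} (hp : LIsSymm F p) (a b : F) :
    LIsSymm F (xiMap F a b b a p) := by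
  rw [LIsSymm, ← LieHom.comp_apply, permMap_swap_comp_xiMap, LieHom.comp_apply, hp]

theorem xiMap_comp_xiMap (a b c d a' b' c' d' : F) :
    (xiMap F a b c d).comp (xiMap F a' b' c' d') =
      xiMap F (a * a' + b * c') (a * b' + b * d') (c * a' + d * c') (c * b' + d * d') := by
  apply L.hom_ext_two <;> simp [xiMap_X_zero, xiMap_X_one] <;> module

theorem xiMap_one : xiMap F 1 0 0 1 = LieHom.id :=
  L.hom_ext_two (by simp [xiMap_X_zero]) (by simp [xiMap_X_one])

theorem xiMap_adj_comp_xiMap {a b c d : F} (h : a * d - b * c ≠ 0) :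
    (xiMap F ((a * d - b * c)⁻¹ * d) (-((a * d - b * c)⁻¹ * b)) (-((a * d - b * c)⁻¹ * c))
      ((a * d - b * c)⁻¹ * a)).comp (xiMap F a b c d) = LieHom.id := by
  rw [xiMap_comp_xiMap, ← xiMap_one]
  congr 1
  · linear_combination inv_mul_cancel₀ h
  · ring
  · ring
  · linear_combination inv_mul_cancel₀ h

theorem xiMap_comp_xiMap_adj {a b c d : F} (h : a * d - b * c ≠ 0) :
    (xiMap F a b c d).comp (xiMap F ((a * d - b * c)⁻¹ * d) (-((a * d - b * c)⁻¹ * b))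
      (-((a * d - b * c)⁻¹ * c)) ((a * d - b * c)⁻¹ * a)) = LieHom.id := by
  rw [xiMap_comp_xiMap, ← xiMap_one]
  congr 1
  · linear_combination inv_mul_cancel₀ h
  · ring
  · ring
  · linear_combination inv_mul_cancel₀ h

section Evaluation

attribute [local instance] LieRing.ofAssociativeRing

theorem LIsSymm.eq_of_smul_X_add_smul_X {s t : F}
    (hp : LIsSymm F (s • X F 2 0 + t • X F 2 1)) : s = t := by
  have := congrFun (congrFun (hp.lift_swap_apply
    ![(!![0, 1; 0, 0] : Matrix (Fin 2) (Fin 2) F), !![0, 0; 1, 0]]) 0) 1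
  simpa [X, FreeLieAlgebra.lift_of_apply] using this.symm

theorem LIsSymm.add_eq_zero_of_lie_smul_X_add_smul_X [NeZero (2 : F)] {s t : F}
    (hp : LIsSymm F ⁅s • X F 2 0 + t • X F 2 1, ⁅X F 2 0, X F 2 1⁆⁆) : s + t = 0 := by
  have key : t * 2 = s * -2 := by
    simpa [X, FreeLieAlgebra.lift_of_apply, Ring.lie_def, Matrix.mul_apply, one_add_one_eq_two,
      ← neg_add'] using
      congrFun (congrFun (hp.lift_swap_apply
        ![(!![0, 1; 0, 0] : Matrix (Fin 2) (Fin 2) F), !![0, 0; 1, 0]]) 0) 1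
  exact mul_left_cancel₀ two_ne_zero (by linear_combination key : (2 : F) * (s + t) = 2 * 0)

end Evaluation

theorem eq_and_eq_of_forall_lIsSymm_xiMap [NeZero (2 : F)] {a b c d : F}
    (h : a * d - b * c ≠ 0) (H : ∀ p : L F 2, LIsSymm F p → LIsSymm F (xiMap F a b c d p)) :
    a = d ∧ b = c := by
  have h₁ : a + b = c + d := by
    have hx : xiMap F a b c d (X F 2 0 + X F 2 1) = (a + b) • X F 2 0 + (c + d) • X F 2 1 := by
      rw [map_add, xiMap_X_zero, xiMap_X_one]
      module
    have hs := H _ lIsSymm_X_add_X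
    rw [hx] at hs
    exact hs.eq_of_smul_X_add_smul_X
  have h₂ : a - b + (c - d) = 0 := by
    have hs := H _ lIsSymm_lie_lie_add_lie_lie
    rw [xiMap_lie_lie_add_lie_lie] at hs
    exact (LIsSymm.of_smul h hs).add_eq_zero_of_lie_smul_X_add_smul_X
  have h₃ : (2 : F) * a = 2 * d := by linear_combination h₁ + h₂
  have h₄ : (2 : F) * b = 2 * c := by linear_combination h₁ - h₂
  exact ⟨mul_left_cancel₀ two_ne_zero h₃, mul_left_cancel₀ two_ne_zero h₄⟩

end

/-- Let `ξ` be the Lie algebra endomorphism of `L_2` with `ξ(x) = ax + cy`,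
`ξ(y) = bx + dy` and `ad − bc ≠ 0` (so `ξ` is an automorphism). Then `ξ` maps every symmetric
element of `L_2` to a symmetric element iff `a = d` and `b = c`; in that case the determinant
condition reads `a² − b² ≠ 0` and the inverse is `ξ⁻¹(x) = (a²−b²)⁻¹(ax − by)`,
`ξ⁻¹(y) = (a²−b²)⁻¹(−bx + ay)`. -/
theorem linear_aut_symm_iff {K : Type*} [Field K] [CharZero K] (a b c d : K)
    (h : a * d - b * c ≠ 0) :
    ((∀ p : L K 2, LIsSymm K p → LIsSymm K (xiMap K a b c d p)) ↔ (a = d ∧ b = c)) ∧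
    (a = d → b = c →
      (a ^ 2 - b ^ 2 ≠ 0 ∧
        ∀ p : L K 2,
          xiMap K ((a ^ 2 - b ^ 2)⁻¹ * a) (-((a ^ 2 - b ^ 2)⁻¹ * b))
              (-((a ^ 2 - b ^ 2)⁻¹ * b)) ((a ^ 2 - b ^ 2)⁻¹ * a) (xiMap K a b c d p) = p ∧
          xiMap K a b c d
              (xiMap K ((a ^ 2 - b ^ 2)⁻¹ * a) (-((a ^ 2 - b ^ 2)⁻¹ * b))
                (-((a ^ 2 - b ^ 2)⁻¹ * b)) ((a ^ 2 - b ^ 2)⁻¹ * a) p) = p)) := by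
  refine ⟨⟨eq_and_eq_of_forall_lIsSymm_xiMap h, ?_⟩, ?_⟩
  · rintro ⟨rfl, rfl⟩ p hp
    exact hp.xiMap a b
  · rintro rfl rfl
    have hdet : a * a - b * b = a ^ 2 - b ^ 2 := by ring
    refine ⟨hdet ▸ h, fun p => ⟨?_, ?_⟩⟩
    · have := LieHom.congr_fun (xiMap_adj_comp_xiMap h) p
      rwa [hdet] at this
    · have := LieHom.congr_fun (xiMap_comp_xiMap_adj h) p
      rwa [hdet] at this
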